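/- arXiv:1610.03163 — 2 statements merged into one kernel-verified Lean document; each statement's English description precedes it below -/
import Mathlib

section
/- In the l-Grigorchuk word η, the words (y,a,y) and (z,a,z) are not factors. -/
/-! Every `τ^{(j)}(a)` with `j ≥ 1` is `w β w` with `|w| + 1` a power of two divisible by `4`,
so the letters at even positions are `a` and those at positions `≡ 1 (mod 4)` are `x`, as in
`τ^{(1)}(a) = a x a`. Two letters at distance `2` in `η` therefore cannot both lie in `{y, z}`. -/

open Filter ENNReal

/-- The left shift on infinite words. -/
def shft {A : Type*} (y : ℕ → A) : ℕ → A := fun n => y (n + 1)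

/-- `w` occurs as a factor of the infinite word `y`. -/
def FactorOf {A : Type*} (w : List A) (y : ℕ → A) : Prop :=
  ∃ k, w = (List.range w.length).map fun i => y (k + i)

/-- The language of a subshift `Y`: all finite factors of elements of `Y`. -/
def LangOf {A : Type*} (Y : Set (ℕ → A)) : Set (List A) :=
  {w | ∃ y ∈ Y, FactorOf w y}

/-- The language of an infinite word `x`: all finite factors of `x`
(equals the language of the subshift `Ω(x)` generated by `x`). -/
def LangX {A : Type*} (x : ℕ → A) : Set (List A) :=
  {w | FactorOf w x}

/-- A subshift: a closed, shift-invariant set of infinite words. -/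
def IsSubshift {A : Type*} [TopologicalSpace A] (Y : Set (ℕ → A)) : Prop :=
  IsClosed Y ∧ shft '' Y = Y

/-- The subshift generated by an infinite word `x`: the closure of its shift orbit. -/
def OmegaOf {A : Type*} [TopologicalSpace A] (x : ℕ → A) : Set (ℕ → A) :=
  closure {y | ∃ k, y = shft^[k] x}

/-- `Y` is aperiodic: it contains no periodic point. -/
def Aperiodic {A : Type*} (Y : Set (ℕ → A)) : Prop :=
  ¬ ∃ y ∈ Y, ∃ k, 0 < k ∧ shft^[k] y = y

/-- `Q(n)`: the supremum of the powers `p` such that some word `W` of length `n`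
in the language `L` has `W^p ∈ L`. -/
noncomputable def QfunL {A : Type*} (L : Set (List A)) (n : ℕ) : ℕ∞ :=
  sSup ((fun q : ℕ => (q : ℕ∞)) ''
    {q | ∃ W ∈ L, W.length = n ∧ (List.replicate q W).flatten ∈ L})

/-- The repetitive function `R(n)`: the smallest `r'` such that every word of
length `r'` in `L` contains all words of `L` of length `n` as factors
(`⊤` if no such `r'` exists). -/
noncomputable def RfunL {A : Type*} (L : Set (List A)) (n : ℕ) : ℕ∞ :=
  sInf ((fun r : ℕ => (r : ℕ∞)) ''
    {r' | ∀ u ∈ L, u.length = r' → ∀ v ∈ L, v.length = n → v <:+: u})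

/-- `Q_α = limsup Q(n)/n^(α-1)`. -/
noncomputable def Qalpha {A : Type*} (L : Set (List A)) (α : ℝ) : ℝ≥0∞ :=
  Filter.atTop.limsup fun n : ℕ => (QfunL L n : ℝ≥0∞) / (n : ℝ≥0∞) ^ (α - 1)

/-- `R_α = limsup R(n)/n^α`. -/
noncomputable def Ralpha {A : Type*} (L : Set (List A)) (α : ℝ) : ℝ≥0∞ :=
  Filter.atTop.limsup fun n : ℕ => (RfunL L n : ℝ≥0∞) / (n : ℝ≥0∞) ^ α

/-- `A_{α,n}`: the infimum of `(|W|-|w|)/|w|^(1/α)` over `w, W` in the language with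
`w` a proper nonempty prefix and suffix of `W` and `|W| = n`. -/
noncomputable def AfunL {A : Type*} (L : Set (List A)) (α : ℝ) (n : ℕ) : ℝ≥0∞ :=
  sInf {t | ∃ w W : List A, w ∈ L ∧ W ∈ L ∧ w ≠ [] ∧ w ≠ W ∧ w <+: W ∧ w <:+ W ∧
    W.length = n ∧ t = ((W.length - w.length : ℕ) : ℝ≥0∞) / (w.length : ℝ≥0∞) ^ (1 / α)}

/-- `ℓ_α = liminf_n A_{α,n}`. -/
noncomputable def lalpha {A : Type*} (L : Set (List A)) (α : ℝ) : ℝ≥0∞ :=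
  Filter.atTop.liminf (AfunL L α)

/-- `ℓ`: the repulsiveness constant (no restriction on `|W|`). -/
noncomputable def lconst {A : Type*} (L : Set (List A)) : ℝ≥0∞ :=
  sInf {t | ∃ w W : List A, w ∈ L ∧ W ∈ L ∧ w ≠ [] ∧ w ≠ W ∧ w <+: W ∧ w <:+ W ∧
    t = ((W.length - w.length : ℕ) : ℝ≥0∞) / (w.length : ℝ≥0∞)}

/-- The four-letter alphabet `{a, x, y, z}` of the Grigorchuk subshift. -/
inductive GW : Type
  | a : GW
  | x : GW
  | y : GW
  | z : GW
  deriving DecidableEq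

instance : Fintype GW :=
  ⟨⟨{GW.a, GW.x, GW.y, GW.z}, by decide⟩, fun c => by cases c <;> decide⟩

instance : TopologicalSpace GW := ⊥
instance : DiscreteTopology GW := ⟨rfl⟩
/-- The substitution `τ_b` on letters: `a ↦ (a, b, a)`, fixing the other letters. -/
def tauL (b : GW) : GW → List GW
  | GW.a => [GW.a, b, GW.a]
  | c => [c]

/-- The substitution `τ_b` on words (monoid homomorphism). -/
def tauW (b : GW) (w : List GW) : List GW := w.flatMap (tauL b)

/-- For a sequence `l` (0-indexed: `l i` is `l_{i+1}` of the paper), `Nblk l j` is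
the index of the block containing position `j`, i.e. the unique `n` with
`l 0 + ⋯ + l (n-1) ≤ j < l 0 + ⋯ + l n`;  this is `N(j) - 1` in the paper. -/
noncomputable def Nblk (l : ℕ → ℕ) (j : ℕ) : ℕ :=
  sInf {n : ℕ | j < ∑ i ∈ Finset.range (n + 1), l i}

/-- `q(j)` of the paper: `j` minus the sum of the lengths of the complete blocks
before position `j`. -/
noncomputable def qrem (l : ℕ → ℕ) (j : ℕ) : ℕ :=
  j - ∑ i ∈ Finset.range (Nblk l j), l i

/-- The letter inserted at step `j + 1`: the blocks use `x, y, z` cyclically. -/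
noncomputable def letterAt (l : ℕ → ℕ) (j : ℕ) : GW :=
  match (Nblk l j) % 3 with
  | 0 => GW.x
  | 1 => GW.y
  | _ => GW.z

/-- `gword l j = τ^{(j)}(a)`, via the recursion
`τ^{(j+1)}(a) = τ^{(j)}(a) β τ^{(j)}(a)` with `β = letterAt l j`. -/
noncomputable def gword (l : ℕ → ℕ) : ℕ → List GW
  | 0 => [GW.a]
  | j + 1 => gword l j ++ letterAt l j :: gword l j

/-- The `l`-Grigorchuk word `η_l`: the unique infinite word having every
`τ^{(j)}(a)` as a prefix. -/
noncomputable def etaG (l : ℕ → ℕ) (n : ℕ) : GW :=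
  (gword l (n + 1)).getD n GW.a

/-- The language of the `l`-Grigorchuk subshift: all factors of `η_l`. -/
noncomputable def LangG (l : ℕ → ℕ) : Set (List GW) := LangX (etaG l)

/-- The prefix of `η_l` of length `k`. -/
noncomputable def prefEta (l : ℕ → ℕ) (k : ℕ) : List GW :=
  (List.range k).map (etaG l)


def AXPattern (w : List GW) : Prop :=
  ∀ i (hi : i < w.length), (i % 2 = 0 → w[i] = GW.a) ∧ (i % 4 = 1 → w[i] = GW.x)

theorem AXPattern.append_cons_self {w : List GW} (hw : AXPattern w) (h4 : 4 ∣ w.length + 1)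
    (b : GW) : AXPattern (w ++ b :: w) := by
  intro i hi
  simp only [List.length_append, List.length_cons] at hi
  rcases lt_trichotomy i w.length with hlt | rfl | hgt
  · rw [List.getElem_append_left hlt]
    exact hw i hlt
  · omega
  · obtain ⟨k, rfl⟩ : ∃ k, i = w.length + 1 + k := ⟨i - (w.length + 1), by omega⟩
    have hk : k < w.length := by omega
    rw [List.getElem_append_right (by omega)]
    simp only [Nat.add_assoc, Nat.add_sub_cancel_left, Nat.add_comm 1 k, List.getElem_cons_succ]
    exact ⟨fun _ => (hw k hk).1 (by omega), fun _ => (hw k hk).2 (by omega)⟩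

theorem gword_length_add_one (l : ℕ → ℕ) (j : ℕ) : (gword l j).length + 1 = 2 ^ (j + 1) := by
  induction j with
  | zero => simp [gword]
  | succ j ih => simp only [gword, List.length_append, List.length_cons]; rw [pow_succ]; omega

theorem letterAt_zero {l : ℕ → ℕ} (hl : 0 < l 0) : letterAt l 0 = GW.x := by
  have hN : Nblk l 0 = 0 := Nat.eq_zero_of_le_zero (Nat.sInf_le (by simpa using hl))
  simp [letterAt, hN]

theorem axPattern_gword {l : ℕ → ℕ} (hl : 0 < l 0) {j : ℕ} (hj : 1 ≤ j) :
    AXPattern (gword l j) := by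
  induction j, hj using Nat.le_induction with
  | base =>
    have h1 : gword l 1 = [GW.a, GW.x, GW.a] := by simp [gword, letterAt_zero hl]
    intro i hi
    simp only [h1, List.length_cons, List.length_nil] at hi ⊢
    interval_cases i <;> simp
  | succ j hj ih =>
    refine ih.append_cons_self ?_ _
    rw [gword_length_add_one]
    exact pow_dvd_pow 2 (show 2 ≤ j + 1 by omega)

theorem etaG_eq_getElem (l : ℕ → ℕ) (n : ℕ) :
    ∃ h : n < (gword l (n + 1)).length, etaG l n = (gword l (n + 1))[n] := by
  have h : n < (gword l (n + 1)).length := by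
    have := gword_length_add_one l (n + 1)
    have := Nat.lt_two_pow_self (n := n + 1 + 1)
    omega
  exact ⟨h, List.getD_eq_getElem _ _ h⟩

theorem etaG_of_even {l : ℕ → ℕ} (hl : 0 < l 0) {n : ℕ} (hn : n % 2 = 0) : etaG l n = GW.a := by
  obtain ⟨h, he⟩ := etaG_eq_getElem l n
  exact he ▸ (axPattern_gword hl (Nat.le_add_left 1 n) n h).1 hn

theorem etaG_of_mod_four_eq_one {l : ℕ → ℕ} (hl : 0 < l 0) {n : ℕ} (hn : n % 4 = 1) :
    etaG l n = GW.x := by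
  obtain ⟨h, he⟩ := etaG_eq_getElem l n
  exact he ▸ (axPattern_gword hl (Nat.le_add_left 1 n) n h).2 hn

theorem not_mem_langG_of_yz {l : ℕ → ℕ} (hl : 0 < l 0) {b c d : GW}
    (hb : b = GW.y ∨ b = GW.z) (hd : d = GW.y ∨ d = GW.z) : [b, c, d] ∉ LangG l := by
  rintro ⟨k, hk⟩
  simp only [List.length_cons, List.length_nil, List.range_succ, List.range_zero] at hk
  obtain ⟨rfl, -, rfl, -⟩ := hk
  have hk4 : k % 2 = 0 ∨ k % 4 = 1 ∨ (k + 2) % 4 = 1 := by omega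
  rcases hk4 with h | h | h
  · simp [etaG_of_even hl h] at hb
  · simp [etaG_of_mod_four_eq_one hl h] at hb
  · simp [etaG_of_mod_four_eq_one hl h] at hd

/-- the words `(y,a,y)` and `(z,a,z)` are not factors of the
`l`-Grigorchuk word `η`. -/
theorem yay_zaz_not_factor (l : ℕ → ℕ) (hl : ∀ i, 0 < l i) :
    [GW.y, GW.a, GW.y] ∉ LangG l ∧ [GW.z, GW.a, GW.z] ∉ LangG l :=
  ⟨not_mem_langG_of_yz (hl 0) (.inl rfl) (.inl rfl),
    not_mem_langG_of_yz (hl 0) (.inr rfl) (.inr rfl)⟩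
end

section
/- For an l-Grigorchuk subshift and k ≡ 2 (mod 4) with η|_k η|_k ∈ L(η), one has η|_k = (a,x)^{k/2} and Q(η|_k) = ⌊(2^{l_1+2} − 2)/k⌋. -/
open Filter ENNReal

/-!
Position `2i` of `η` carries `a` and position `2i+1` carries the letter of the block containing
`v₂(i+1)` (a ruler sequence). Hence `(a,x)^m` occurs in `η` iff there are `m` consecutive
integers `t` with `letterAt l (v₂ t) = x`. Valuations below `l 0` give `x` and the valuation
`l 0` gives `y`; every `2^(l 0 + 1)` consecutive integers contain an odd multiple of `2^(l 0)`,
while the `2^(l 0 + 1) - 1` integers centred at `2^(l 0 + l 1 + l 2)` (itself an `x`-position)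
avoid them. So `(a,x)^m ∈ L(η)` iff `m ≤ 2^(l 0 + 1) - 1`.

If `η|_k` occurs at `s` and at `s + k`, then `s` is even, and since `k ≡ 2 (mod 4)` every odd
position below `k` is carried by one of the two occurrences to a position `≡ 1 (mod 4)`, where
`v₂ = 0` forces the letter `x`. Thus `η|_k = (a,x)^(k/2)` and the bound on powers follows.
-/

section Factors

variable {A : Type*}

theorem factorOf_iff_getElem {w : List A} {y : ℕ → A} :
    FactorOf w y ↔ ∃ s, ∀ i (hi : i < w.length), w[i] = y (s + i) := by
  constructor
  · rintro ⟨s, hs⟩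
    exact ⟨s, fun i hi => by rw [List.getElem_of_eq hs]; simp⟩
  · rintro ⟨s, hs⟩
    exact ⟨s, List.ext_getElem (by simp) fun i h _ => by simp [hs i h]⟩

theorem flatten_replicate_flatten_replicate (u : List A) (p m : ℕ) :
    (List.replicate p (List.replicate m u).flatten).flatten
      = (List.replicate (p * m) u).flatten := by
  induction p with
  | zero => simp
  | succ p ih =>
    rw [List.replicate_succ', List.flatten_append, ih, Nat.succ_mul, List.replicate_add,
      List.flatten_append, List.flatten_singleton]

end Factors

theorem padicValNat_two_pow_mul {j m : ℕ} (hm : ¬ 2 ∣ m) : padicValNat 2 (2 ^ j * m) = j := by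
  rw [padicValNat.mul (by positivity) (by rintro rfl; simp at hm), padicValNat.prime_pow,
    padicValNat.eq_zero_of_not_dvd hm, add_zero]

theorem padicValNat_two_pow_add {j r : ℕ} (hr0 : 0 < r) (hr : r < 2 ^ j) :
    padicValNat 2 (2 ^ j + r) = padicValNat 2 r := by
  obtain ⟨v, r', hr', rfl⟩ := Nat.exists_eq_pow_mul_and_not_dvd hr0.ne' 2 (by norm_num)
  have hvj : v < j := by
    have hr'0 : 0 < r' := Nat.pos_of_ne_zero (by rintro rfl; exact hr' (dvd_zero 2))
    exact (Nat.pow_lt_pow_iff_right (by norm_num)).mp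
      ((Nat.le_mul_of_pos_right _ hr'0).trans_lt hr)
  have hsplit : 2 ^ j + 2 ^ v * r' = 2 ^ v * (2 * 2 ^ (j - v - 1) + r') := by
    conv_lhs => rw [show j = v + 1 + (j - v - 1) by omega]
    ring
  rw [hsplit, padicValNat_two_pow_mul hr', padicValNat_two_pow_mul (by omega)]

theorem exists_two_pow_mul_odd_mem_Ioc (L u : ℕ) :
    ∃ c, 2 ^ L * (2 * c + 1) ∈ Set.Ioc u (u + 2 ^ (L + 1)) := by
  set c := (u + 2 ^ L) / 2 ^ (L + 1)
  have hdiv : 2 ^ (L + 1) * c + (u + 2 ^ L) % 2 ^ (L + 1) = u + 2 ^ L := Nat.div_add_mod _ _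
  have hmod := Nat.mod_lt (u + 2 ^ L) (show 0 < 2 ^ (L + 1) by positivity)
  have hpow : 2 ^ (L + 1) = 2 * 2 ^ L := pow_succ' 2 L
  have hc : 2 ^ L * (2 * c + 1) = 2 ^ (L + 1) * c + 2 ^ L := by rw [hpow]; ring
  exact ⟨c, by omega, by omega⟩

def axPow (m : ℕ) : List GW := (List.replicate m [GW.a, GW.x]).flatten

theorem axPow_succ (m : ℕ) : axPow (m + 1) = axPow m ++ [GW.a, GW.x] := by
  rw [axPow, List.replicate_succ', List.flatten_append, List.flatten_singleton, axPow]

theorem length_axPow (m : ℕ) : (axPow m).length = 2 * m := by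
  induction m with
  | zero => rfl
  | succ m ih => simp [axPow_succ, ih]; ring

theorem getElem_axPow {m i : ℕ} (hi : i < (axPow m).length) :
    (axPow m)[i] = if Even i then GW.a else GW.x := by
  induction m with
  | zero => simp [length_axPow] at hi
  | succ m ih =>
    simp only [axPow_succ]
    rcases Nat.lt_or_ge i (2 * m) with hlt | hge
    · rw [List.getElem_append_left (by rwa [length_axPow]), ih]
    · rw [List.getElem_append_right (by rwa [length_axPow])]
      have : i = 2 * m ∨ i = 2 * m + 1 := by
        rw [length_axPow] at hi; omega
      rcases this with rfl | rfl <;> simp [length_axPow, parity_simps]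

section Grigorchuk

variable {l : ℕ → ℕ}

theorem Nblk_eq {n j : ℕ} (hlo : ∑ i ∈ Finset.range n, l i ≤ j)
    (hhi : j < ∑ i ∈ Finset.range (n + 1), l i) : Nblk l j = n := by
  refine le_antisymm (Nat.sInf_le hhi) (le_csInf ⟨n, hhi⟩ fun b hb => ?_)
  by_contra! hbn
  have : ∑ i ∈ Finset.range (b + 1), l i ≤ ∑ i ∈ Finset.range n, l i :=
    Finset.sum_le_sum_of_subset (Finset.range_subset_range.mpr hbn)
  exact absurd (hb.trans_le this) (not_lt.mpr hlo)

theorem letterAt_ne_a (j : ℕ) : letterAt l j ≠ GW.a := by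
  unfold letterAt
  split <;> simp

theorem letterAt_of_lt_l_zero {j : ℕ} (h : j < l 0) : letterAt l j = GW.x := by
  rw [letterAt, Nblk_eq (n := 0) (by simp) (by simpa using h)]
  rfl

theorem letterAt_l_zero (h1 : 0 < l 1) : letterAt l (l 0) = GW.y := by
  rw [letterAt, Nblk_eq (n := 1) (by simp) (by simp [Finset.sum_range_succ, h1])]
  rfl

theorem letterAt_l_zero_add_l_one_add_l_two (h3 : 0 < l 3) :
    letterAt l (l 0 + l 1 + l 2) = GW.x := by
  rw [letterAt, Nblk_eq (n := 3) (by simp [Finset.sum_range_succ])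
    (by simp [Finset.sum_range_succ, h3])]
  rfl

variable (l) in
theorem length_gword (j : ℕ) : (gword l j).length = 2 ^ (j + 1) - 1 := by
  induction j with
  | zero => rfl
  | succ j ih =>
    have : 0 < 2 ^ (j + 1) := by positivity
    simp only [gword, List.length_append, List.length_cons, ih, pow_succ 2 (j + 1)]
    omega

theorem getD_gword_even {j i : ℕ} (h : 2 * i < 2 ^ (j + 1) - 1) :
    (gword l j).getD (2 * i) GW.a = GW.a := by
  induction j generalizing i with
  | zero =>
    obtain rfl : i = 0 := by omega
    rfl
  | succ j ih =>
    have hlen := length_gword l j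
    have hpow : 2 ^ (j + 2) = 2 * 2 ^ (j + 1) := pow_succ' 2 (j + 1)
    have hpow' : 2 ^ (j + 1) = 2 * 2 ^ j := pow_succ' 2 j
    rcases Nat.lt_or_gt_of_ne (show 2 * i ≠ 2 ^ (j + 1) - 1 by omega) with hlt | hgt
    · rw [gword, List.getD_append _ _ _ _ (by omega), ih hlt]
    · rw [gword, List.getD_append_right _ _ _ _ (by omega), hlen,
        show 2 * i - (2 ^ (j + 1) - 1) = 2 * (i - 2 ^ j) + 1 by omega,
        List.getD_cons_succ, ih (by omega)]

theorem getD_gword_odd {j i : ℕ} (h : 2 * i + 1 < 2 ^ (j + 1) - 1) :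
    (gword l j).getD (2 * i + 1) GW.a = letterAt l (padicValNat 2 (i + 1)) := by
  induction j generalizing i with
  | zero => omega
  | succ j ih =>
    have hlen := length_gword l j
    have hpow : 2 ^ (j + 2) = 2 * 2 ^ (j + 1) := pow_succ' 2 (j + 1)
    have hpow' : 2 ^ (j + 1) = 2 * 2 ^ j := pow_succ' 2 j
    rcases lt_trichotomy (2 * i + 1) (2 ^ (j + 1) - 1) with hlt | heq | hgt
    · rw [gword, List.getD_append _ _ _ _ (by omega), ih hlt]
    · rw [gword, List.getD_append_right _ _ _ _ (by omega), hlen, heq, Nat.sub_self,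
        List.getD_cons_zero, show i + 1 = 2 ^ j by omega, padicValNat.prime_pow]
    · rw [gword, List.getD_append_right _ _ _ _ (by omega), hlen,
        show 2 * i + 1 - (2 ^ (j + 1) - 1) = 2 * (i - 2 ^ j) + 1 + 1 by omega,
        List.getD_cons_succ, ih (by omega), show i + 1 = 2 ^ j + (i - 2 ^ j + 1) by omega,
        padicValNat_two_pow_add (by omega) (by omega)]

variable (l) in
theorem etaG_two_mul (i : ℕ) : etaG l (2 * i) = GW.a :=
  getD_gword_even (by have := (2 * i).lt_two_pow_self; rw [pow_succ, pow_succ]; omega)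

variable (l) in
theorem etaG_two_mul_add_one (i : ℕ) :
    etaG l (2 * i + 1) = letterAt l (padicValNat 2 (i + 1)) :=
  getD_gword_odd (by have := (2 * i + 1).lt_two_pow_self; rw [pow_succ, pow_succ]; omega)

theorem etaG_eq_a_iff {n : ℕ} : etaG l n = GW.a ↔ Even n := by
  rcases Nat.even_or_odd' n with ⟨i, rfl | rfl⟩
  · simp [etaG_two_mul]
  · simp [etaG_two_mul_add_one, letterAt_ne_a]

theorem etaG_four_mul_add_one (h0 : 0 < l 0) (q : ℕ) : etaG l (4 * q + 1) = GW.x := by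
  rw [show 4 * q + 1 = 2 * (2 * q) + 1 by ring, etaG_two_mul_add_one,
    padicValNat.eq_zero_of_not_dvd (by omega)]
  exact letterAt_of_lt_l_zero h0

theorem axPow_mem_LangG_iff {m : ℕ} (hm : 0 < m) :
    axPow m ∈ LangG l ↔
      ∃ u, ∀ t, u < t → t ≤ u + m → letterAt l (padicValNat 2 t) = GW.x := by
  change FactorOf _ _ ↔ _
  rw [factorOf_iff_getElem]
  constructor
  · rintro ⟨s, hs⟩
    have hs0 := hs 0 (by rw [length_axPow]; omega)
    rw [getElem_axPow, if_pos Even.zero, add_zero] at hs0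
    obtain ⟨u, rfl⟩ : Even s := etaG_eq_a_iff.mp hs0.symm
    refine ⟨u, fun t hlo hhi => ?_⟩
    have ht := hs (2 * (t - u - 1) + 1) (by rw [length_axPow]; omega)
    rw [getElem_axPow, if_neg (Nat.not_even_two_mul_add_one _),
      show u + u + (2 * (t - u - 1) + 1) = 2 * (t - 1) + 1 by omega, etaG_two_mul_add_one,
      Nat.sub_add_cancel (by omega)] at ht
    exact ht.symm
  · rintro ⟨u, hu⟩
    refine ⟨2 * u, fun i hi => ?_⟩
    rw [length_axPow] at hi
    rw [getElem_axPow]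
    rcases Nat.even_or_odd' i with ⟨j, rfl | rfl⟩
    · rw [if_pos (even_two_mul j), ← mul_add, etaG_two_mul]
    · rw [if_neg (Nat.not_even_two_mul_add_one j), show 2 * u + (2 * j + 1) = 2 * (u + j) + 1 by
        ring, etaG_two_mul_add_one, hu _ (by omega) (by omega)]

theorem le_of_axPow_mem_LangG (h1 : 0 < l 1) {m : ℕ} (hm : axPow m ∈ LangG l) :
    m ≤ 2 ^ (l 0 + 1) - 1 := by
  by_contra! hlt
  obtain ⟨u, hu⟩ := (axPow_mem_LangG_iff (by omega)).mp hm
  obtain ⟨c, hlo, hhi⟩ := exists_two_pow_mul_odd_mem_Ioc (l 0) u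
  have hc := hu _ hlo (by omega)
  rw [padicValNat_two_pow_mul (by omega), letterAt_l_zero h1] at hc
  cases hc

theorem axPow_mem_LangG (h3 : 0 < l 3) {m : ℕ} (hm : m ≤ 2 ^ (l 0 + 1) - 1) :
    axPow m ∈ LangG l := by
  rcases m.eq_zero_or_pos with rfl | hm0
  · exact ⟨0, rfl⟩
  rw [axPow_mem_LangG_iff hm0]
  have hPE : 2 ^ l 0 ∣ 2 ^ (l 0 + l 1 + l 2) := pow_dvd_pow 2 (by omega)
  have hPleE := Nat.le_of_dvd (by positivity) hPE
  have hpow : 2 ^ (l 0 + 1) = 2 * 2 ^ l 0 := pow_succ' 2 (l 0)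
  refine ⟨2 ^ (l 0 + l 1 + l 2) - 2 ^ l 0, fun t hlo hhi => ?_⟩
  rcases eq_or_ne t (2 ^ (l 0 + l 1 + l 2)) with rfl | hne
  · rw [padicValNat.prime_pow, letterAt_l_zero_add_l_one_add_l_two h3]
  apply letterAt_of_lt_l_zero
  by_contra! hle
  have hPt : 2 ^ l 0 ∣ t := (padicValNat_dvd_iff_le (by omega)).mpr hle
  rcases hne.lt_or_gt with hlt | hgt
  · have := Nat.le_of_dvd (by omega) (Nat.dvd_sub hPE hPt)
    omega
  · have := Nat.le_of_dvd (by omega) (Nat.dvd_sub hPt hPE)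
    omega

theorem axPow_mem_LangG_iff_le (hl : ∀ i, 0 < l i) {m : ℕ} :
    axPow m ∈ LangG l ↔ m ≤ 2 ^ (l 0 + 1) - 1 :=
  ⟨le_of_axPow_mem_LangG (hl 1), axPow_mem_LangG (hl 3)⟩

variable (l) in
theorem length_prefEta (k : ℕ) : (prefEta l k).length = k := by
  simp [prefEta]

theorem prefEta_eq_axPow_of_sq_mem (h0 : 0 < l 0) {k : ℕ} (hk : k % 4 = 2)
    (hsq : prefEta l k ++ prefEta l k ∈ LangG l) : prefEta l k = axPow (k / 2) := by
  obtain ⟨s, hs⟩ := factorOf_iff_getElem.mp hsq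
  have hfst : ∀ i < k, etaG l (s + i) = etaG l i := fun i hi => by
    have := hs i (by simp [length_prefEta]; omega)
    rw [List.getElem_append_left (by rwa [length_prefEta])] at this
    simpa [prefEta] using this.symm
  have hsnd : ∀ i < k, etaG l (s + k + i) = etaG l i := fun i hi => by
    have := hs (k + i) (by simp [length_prefEta]; omega)
    rw [List.getElem_append_right (by simp [length_prefEta])] at this
    simpa [prefEta, add_assoc] using this.symm
  obtain ⟨u, rfl⟩ : Even s :=
    etaG_eq_a_iff.mp ((hfst 0 (by omega)).trans (etaG_two_mul l 0))
  have hodd : ∀ j, 2 * j + 1 < k → etaG l (2 * j + 1) = GW.x := fun j hj => by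
    rcases Nat.lt_or_ge ((u + u + (2 * j + 1)) % 4) 2 with h | h
    · rw [← hfst _ hj, show u + u + (2 * j + 1) = 4 * ((u + u + (2 * j + 1)) / 4) + 1 by omega,
        etaG_four_mul_add_one h0]
    · rw [← hsnd _ hj, show u + u + k + (2 * j + 1) = 4 * ((u + u + k + (2 * j + 1)) / 4) + 1 by
        omega, etaG_four_mul_add_one h0]
  refine List.ext_getElem (by rw [length_prefEta, length_axPow]; omega) fun i h _ => ?_
  rw [getElem_axPow]
  simp only [prefEta, List.getElem_map, List.getElem_range]
  split_ifs with he
  · exact etaG_eq_a_iff.mpr he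
  · obtain ⟨j, rfl⟩ := Nat.not_even_iff_odd.mp he
    exact hodd j (by simpa [length_prefEta] using h)

end Grigorchuk

/-- if `k ≡ 2 (mod 4)` and `η|_k η|_k ∈ L(η)`, then
`η|_k = (a,x)^(k/2)` and `Q(η|_k) = ⌊(2^(l₁+2) - 2)/k⌋`. -/
theorem Q_prefix_two_mod_four (l : ℕ → ℕ) (hl : ∀ i, 0 < l i) (k : ℕ)
    (hk : k % 4 = 2) (hsq : prefEta l k ++ prefEta l k ∈ LangG l) :
    prefEta l k = (List.replicate (k / 2) [GW.a, GW.x]).flatten ∧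
    IsGreatest {p : ℕ | (List.replicate p (prefEta l k)).flatten ∈ LangG l}
      ((2 ^ (l 0 + 2) - 2) / k) := by
  have hpref := prefEta_eq_axPow_of_sq_mem (hl 0) hk hsq
  refine ⟨hpref, ?_⟩
  obtain ⟨h, rfl⟩ : ∃ h, k = 2 * h := ⟨k / 2, by omega⟩
  have hmem : ∀ p, (List.replicate p (prefEta l (2 * h))).flatten ∈ LangG l ↔
      p * (2 * h) ≤ 2 ^ (l 0 + 2) - 2 := fun p => by
    rw [hpref, Nat.mul_div_cancel_left h two_pos, axPow, flatten_replicate_flatten_replicate,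
      ← axPow, axPow_mem_LangG_iff_le hl, pow_succ 2 (l 0 + 1), mul_left_comm]
    omega
  exact ⟨(hmem _).2 (Nat.div_mul_le_self _ _),
    fun p hp => (Nat.le_div_iff_mul_le (by omega)).2 ((hmem p).1 hp)⟩
end
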